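/- arXiv:1210.3560 — 6 statements merged into one kernel-verified Lean document; each statement's English description precedes it below -/
import Mathlib

section
/- Let X_1, …, X_n be nonnegative independent real random variables, where X_j takes values in the interval [α_j, β_j] with α_j > 0 for each j, and let c = max_j β_j/α_j. Let ε and δ be constants with 0 < ε < 1 and 0 < δ < 1/(2e²). Then the index set {1, …, n} can be partitioned into three sets R, S, T such that: (1) |R| ≤ (16 c²/ε³)·ln(2/δ); (2) the sum ∑_{j∈S} X_j is (ε, δ)-concentrated; (3) ∑_{j∈T} E[X_j] ≤ ε · ∑_{j=1}^n E[X_j]. -/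
/-!
Put the `t = ⌊16 c² / ε³ · log (2 / δ)⌋` variables of largest mean into `R`. If the remaining
means add up to at most `ε` times the total, the remaining indices form `T`. Otherwise they
form `S`, and every mean in `S` is at most a `1 / (ε t)` fraction of `∑_{j ∈ S} E[X_j]`: it is
below each of the `t` means in `R`, whose sum is less than `∑_{j ∈ S} E[X_j] / ε`. Since
`β_j - α_j ≤ c E[X_j]`, Hoeffding's inequality bounds the probability of an `ε`-relative
deviation of `∑_{j ∈ S} X_j` by `2 exp (-2 ε³ t / c²) ≤ δ`.
-/

open MeasureTheory ProbabilityTheory Finset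
open scoped NNReal

section Combinatorics

variable {ι : Type*} [Fintype ι] [DecidableEq ι]

lemma exists_card_eq_forall_le_of_notMem {β : Type*} [LinearOrder β] (f : ι → β) {t : ℕ}
    (ht : t ≤ Fintype.card ι) :
    ∃ R : Finset ι, #R = t ∧ ∀ i ∈ R, ∀ j ∉ R, f j ≤ f i := by
  induction t with
  | zero => exact ⟨∅, rfl, by simp⟩
  | succ t ih =>
    obtain ⟨R, hcard, hR⟩ := ih (Nat.le_of_succ_le ht)
    have hne : Rᶜ.Nonempty := by
      rw [← card_pos, card_compl, hcard]
      omega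
    obtain ⟨k, hk, hmax⟩ := exists_max_image _ f hne
    have hkR : k ∉ R := mem_compl.mp hk
    refine ⟨insert k R, by rw [card_insert_of_notMem hkR, hcard], ?_⟩
    intro i hi j hj
    rcases mem_insert.mp hi with rfl | hiR
    · exact hmax j (mem_compl.mpr fun h => hj (mem_insert_of_mem h))
    · exact hR i hiR j fun h => hj (mem_insert_of_mem h)

lemma exists_partition_light_or_spread (p : ι → ℝ) (hp : ∀ i, 0 ≤ p i) (t : ℕ) {ε : ℝ}
    (hε : 0 ≤ ε) :
    ∃ R S T : Finset ι, Disjoint R S ∧ Disjoint R T ∧ Disjoint S T ∧ R ∪ S ∪ T = univ ∧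
      #R ≤ t ∧ (∀ j ∈ S, ε * t * p j ≤ ∑ i ∈ S, p i) ∧ ∑ i ∈ T, p i ≤ ε * ∑ i, p i := by
  obtain ⟨R, hRcard, hRtop⟩ :=
    exists_card_eq_forall_le_of_notMem p (min_le_right t (Fintype.card ι))
  have hRt : #R ≤ t := hRcard ▸ min_le_left _ _
  by_cases hlight : ∑ i ∈ Rᶜ, p i ≤ ε * ∑ i, p i
  · exact ⟨R, ∅, Rᶜ, by simp, disjoint_compl_right, by simp, by simp, hRt, by simp, hlight⟩
  refine ⟨R, Rᶜ, ∅, disjoint_compl_right, by simp, by simp, by simp, hRt, ?_,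
    by simpa using mul_nonneg hε (sum_nonneg fun i _ => hp i)⟩
  intro j hj
  have hRcard' : #R = t := by
    by_contra h
    have : R = univ := eq_univ_of_card R (by omega)
    simp [this] at hj
  calc ε * t * p j = ε * ∑ _i ∈ R, p j := by rw [sum_const, hRcard', nsmul_eq_mul]; ring
    _ ≤ ε * ∑ i ∈ R, p i :=
      mul_le_mul_of_nonneg_left (sum_le_sum fun i hi => hRtop i hi j (mem_compl.mp hj)) hε
    _ ≤ ε * ∑ i, p i :=
      mul_le_mul_of_nonneg_left (sum_le_sum_of_subset_of_nonneg (subset_univ R)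
        fun i _ _ => hp i) hε
    _ ≤ ∑ i ∈ Rᶜ, p i := (not_le.mp hlight).le

end Combinatorics

lemma eight_le_mul_log_two_div {c ε δ : ℝ} (hc : 1 ≤ c) (hε0 : 0 < ε) (hε1 : ε ≤ 1)
    (hδ0 : 0 < δ) (hδ1 : δ ≤ 1) : 8 ≤ 16 * c ^ 2 / ε ^ 3 * Real.log (2 / δ) := by
  have hL : 1 / 2 ≤ Real.log (2 / δ) := by
    have h2δ : 2 ≤ 2 / δ := (le_div_iff₀ hδ0).2 (by linarith)
    linarith [Real.log_le_log two_pos h2δ, Real.log_two_gt_d9]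
  have hcε : 1 ≤ c ^ 2 / ε ^ 3 :=
    (one_le_div (by positivity)).2 ((pow_le_one₀ hε0.le hε1).trans (one_le_pow₀ hc))
  calc (8 : ℝ) = 16 * 1 * (1 / 2) := by norm_num
    _ ≤ 16 * c ^ 2 / ε ^ 3 * Real.log (2 / δ) := by rw [mul_div_assoc]; gcongr

lemma sum_sq_le_of_forall_mul_le_sum {ι : Type*} (s : Finset ι) {p d : ι → ℝ} {c κ : ℝ}
    (hκ : 0 < κ) (hp : ∀ i ∈ s, 0 ≤ p i) (hd : ∀ i ∈ s, 0 ≤ d i) (hdp : ∀ i ∈ s, d i ≤ c * p i)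
    (hspread : ∀ i ∈ s, κ * p i ≤ ∑ j ∈ s, p j) :
    ∑ i ∈ s, d i ^ 2 ≤ c ^ 2 * (∑ i ∈ s, p i) ^ 2 / κ := by
  calc ∑ i ∈ s, d i ^ 2 ≤ ∑ i ∈ s, c ^ 2 * (∑ j ∈ s, p j) / κ * p i := by
        refine sum_le_sum fun i hi => ?_
        have hpi : p i ≤ (∑ j ∈ s, p j) / κ := by
          rw [le_div_iff₀ hκ, mul_comm]; exact hspread i hi
        calc d i ^ 2 ≤ (c * p i) ^ 2 := pow_le_pow_left₀ (hd i hi) (hdp i hi) 2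
          _ = c ^ 2 * p i * p i := by ring
          _ ≤ c ^ 2 * ((∑ j ∈ s, p j) / κ) * p i := by gcongr; exact hp i hi
          _ = c ^ 2 * (∑ j ∈ s, p j) / κ * p i := by ring
    _ = c ^ 2 * (∑ i ∈ s, p i) ^ 2 / κ := by rw [← mul_sum]; ring

namespace ProbabilityTheory

variable {Ω : Type*} [MeasurableSpace Ω] {μ : Measure Ω}

def IsConcentrated (μ : Measure Ω) (Y : Ω → ℝ) (ε δ : ℝ) : Prop :=
  ENNReal.ofReal (1 - δ) ≤ μ {ω | (1 - ε) * μ[Y] ≤ Y ω ∧ Y ω ≤ (1 + ε) * μ[Y]}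

lemma HasSubgaussianMGF.mono {X : Ω → ℝ} {c c' : ℝ≥0} (h : HasSubgaussianMGF X c μ)
    (hc : c ≤ c') : HasSubgaussianMGF X c' μ :=
  ⟨h.integrable_exp_mul, fun t => (h.mgf_le t).trans (by gcongr)⟩

variable [IsProbabilityMeasure μ]

lemma isConcentrated_of_measureReal_abs_sub_ge_le {Y : Ω → ℝ} {ε δ : ℝ}
    (h : μ.real {ω | ε * μ[Y] ≤ |Y ω - μ[Y]|} ≤ δ) : IsConcentrated μ Y ε δ := by
  set good := {ω | (1 - ε) * μ[Y] ≤ Y ω ∧ Y ω ≤ (1 + ε) * μ[Y]}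
  have hbad : goodᶜ ⊆ {ω | ε * μ[Y] ≤ |Y ω - μ[Y]|} := by
    intro ω hω
    simp only [good, Set.mem_compl_iff, Set.mem_ofPred_eq, not_and_or, not_le] at hω ⊢
    rcases hω with hω | hω
    · exact le_abs.mpr (Or.inr (by linarith))
    · exact le_abs.mpr (Or.inl (by linarith))
  have hcover : 1 ≤ μ.real good + μ.real goodᶜ := by
    simpa [Set.union_compl_self] using measureReal_union_le (μ := μ) good goodᶜ
  have : 1 - δ ≤ μ.real good := by linarith [measureReal_mono (μ := μ) hbad]
  exact (ENNReal.ofReal_le_ofReal this).trans_eq (ofReal_measureReal (measure_ne_top _ _))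

lemma integral_mem_Icc_of_forall_mem {Y : Ω → ℝ} {a b : ℝ} (hY : Measurable Y)
    (h : ∀ ω, Y ω ∈ Set.Icc a b) : μ[Y] ∈ Set.Icc a b := by
  have hint := Integrable.of_mem_Icc a b hY.aemeasurable (ae_of_all μ h)
  constructor
  · simpa using integral_mono (integrable_const a) hint fun ω => (h ω).1
  · simpa using integral_mono hint (integrable_const b) fun ω => (h ω).2

variable {ι : Type*} {X : ι → Ω → ℝ} {a b : ι → ℝ}

lemma hasSubgaussianMGF_sum_sub_integral (hindep : iIndepFun X μ) (hmeas : ∀ i, Measurable (X i))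
    (hX : ∀ i ω, X i ω ∈ Set.Icc (a i) (b i)) (s : Finset ι) :
    HasSubgaussianMGF (fun ω => ∑ i ∈ s, (X i ω - μ[X i])) (∑ i ∈ s, (‖b i - a i‖₊ / 2) ^ 2) μ :=
  HasSubgaussianMGF.sum_of_iIndepFun (c := fun i => (‖b i - a i‖₊ / 2) ^ 2)
    (hindep.comp (fun i x => x - μ[X i]) fun _ => measurable_id.sub_const _)
    fun i _ => hasSubgaussianMGF_of_mem_Icc (hmeas i).aemeasurable (ae_of_all _ (hX i))

/-- **Hoeffding's inequality**, two-sided. -/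
lemma measureReal_abs_sum_sub_ge_le (hindep : iIndepFun X μ) (hmeas : ∀ i, Measurable (X i))
    (hX : ∀ i ω, X i ω ∈ Set.Icc (a i) (b i)) (s : Finset ι) {v η : ℝ} (hv : 0 < v)
    (hvar : ∑ i ∈ s, (b i - a i) ^ 2 ≤ v) (hη : 0 ≤ η) :
    μ.real {ω | η ≤ |∑ i ∈ s, X i ω - ∑ i ∈ s, μ[X i]|} ≤ 2 * Real.exp (-2 * η ^ 2 / v) := by
  set Z := fun ω => ∑ i ∈ s, (X i ω - μ[X i])
  have hZ : HasSubgaussianMGF Z (v / 4).toNNReal μ := by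
    refine (hasSubgaussianMGF_sum_sub_integral hindep hmeas hX s).mono ?_
    rw [← NNReal.coe_le_coe, Real.coe_toNNReal _ (by positivity)]
    push_cast
    simp only [Real.norm_eq_abs, div_pow, sq_abs, ← sum_div]
    linarith
  have htail : ∀ W : Ω → ℝ, HasSubgaussianMGF W (v / 4).toNNReal μ →
      μ.real {ω | η ≤ W ω} ≤ Real.exp (-2 * η ^ 2 / v) := fun W hW => by
    convert hW.measure_ge_le hη using 2
    rw [Real.coe_toNNReal _ (by positivity)]
    field_simp
    ring
  have hsplit : {ω | η ≤ |∑ i ∈ s, X i ω - ∑ i ∈ s, μ[X i]|} ⊆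
      {ω | η ≤ Z ω} ∪ {ω | η ≤ (-Z) ω} := by
    intro ω hω
    simp only [Set.mem_union, Set.mem_ofPred_eq, Z, Pi.neg_apply, sum_sub_distrib] at hω ⊢
    exact le_abs.mp hω
  calc _ ≤ μ.real {ω | η ≤ Z ω} + μ.real {ω | η ≤ (-Z) ω} :=
        (measureReal_mono hsplit).trans (measureReal_union_le _ _)
    _ ≤ 2 * Real.exp (-2 * η ^ 2 / v) := by linarith [htail Z hZ, htail (-Z) hZ.neg]

/-- With `M = ∑ i ∈ s, μ[X i]` we get `∑ (b i - a i) ^ 2 ≤ c ^ 2 * M ^ 2 / κ`, so Hoeffding's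
exponent at deviation `ε * M` is `2 * ε ^ 2 * κ / c ^ 2`, whatever `M` is. -/
theorem isConcentrated_sum_of_forall_mul_le_sum (hindep : iIndepFun X μ)
    (hmeas : ∀ i, Measurable (X i)) (hX : ∀ i ω, X i ω ∈ Set.Icc (a i) (b i))
    (ha : ∀ i, 0 < a i) {c : ℝ} (hc : 0 < c) (hb : ∀ i, b i ≤ c * a i)
    {s : Finset ι} (hs : s.Nonempty) {κ ε δ : ℝ} (hκ : 0 < κ) (hε : 0 < ε) (hδ : 0 < δ)
    (hspread : ∀ i ∈ s, κ * μ[X i] ≤ ∑ j ∈ s, μ[X j])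
    (hκδ : c ^ 2 * Real.log (2 / δ) ≤ 2 * ε ^ 2 * κ) :
    IsConcentrated μ (fun ω => ∑ i ∈ s, X i ω) ε δ := by
  have hE i := integral_mem_Icc_of_forall_mem (μ := μ) (hmeas i) (hX i)
  have hEpos i : 0 < μ[X i] := (ha i).trans_le (hE i).1
  set M := ∑ i ∈ s, μ[X i]
  have hM : 0 < M := sum_pos (fun i _ => hEpos i) hs
  have hintegral : μ[fun ω => ∑ i ∈ s, X i ω] = M := integral_finsetSum s fun i _ =>
    Integrable.of_mem_Icc (a i) (b i) (hmeas i).aemeasurable (ae_of_all μ (hX i))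
  have hvar : ∑ i ∈ s, (b i - a i) ^ 2 ≤ c ^ 2 * M ^ 2 / κ :=
    sum_sq_le_of_forall_mul_le_sum s hκ (fun i _ => (hEpos i).le)
      (fun i _ => sub_nonneg.2 ((hE i).1.trans (hE i).2))
      (fun i _ => by nlinarith [hb i, (hE i).1, ha i]) hspread
  have hexponent : -2 * (ε * M) ^ 2 / (c ^ 2 * M ^ 2 / κ) ≤ -Real.log (2 / δ) := by
    rw [show -2 * (ε * M) ^ 2 / (c ^ 2 * M ^ 2 / κ) = -(2 * ε ^ 2 * κ / c ^ 2) by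
      field_simp, neg_le_neg_iff, le_div_iff₀ (by positivity)]
    linarith
  apply isConcentrated_of_measureReal_abs_sub_ge_le
  rw [hintegral]
  calc _ ≤ 2 * Real.exp (-2 * (ε * M) ^ 2 / (c ^ 2 * M ^ 2 / κ)) :=
        measureReal_abs_sum_sub_ge_le hindep hmeas hX s (by positivity) hvar (by positivity)
    _ ≤ 2 * Real.exp (-Real.log (2 / δ)) := by gcongr
    _ = δ := by rw [Real.exp_neg, Real.exp_log (by positivity)]; field_simp

end ProbabilityTheory

theorem partitioning_lemma_general {Ω : Type*} [MeasurableSpace Ω] (μ : Measure Ω)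
    [IsProbabilityMeasure μ] (n : ℕ)
    (X : Fin n → Ω → ℝ) (α β : Fin n → ℝ)
    (hα : ∀ j, 0 < α j)
    (hrange : ∀ j ω, X j ω ∈ Set.Icc (α j) (β j))
    (hmeas : ∀ j, Measurable (X j))
    (hindep : iIndepFun X μ)
    (c : ℝ) (hc : IsGreatest (Set.range fun j => β j / α j) c)
    (ε δ : ℝ) (hε0 : 0 < ε) (hε1 : ε < 1)
    (hδ0 : 0 < δ) (hδ1 : δ < 1 / (2 * Real.exp 2)) :
    ∃ R S T : Finset (Fin n),
      Disjoint R S ∧ Disjoint R T ∧ Disjoint S T ∧ R ∪ S ∪ T = Finset.univ ∧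
      (R.card : ℝ) ≤ 16 * c ^ 2 / ε ^ 3 * Real.log (2 / δ) ∧
      ENNReal.ofReal (1 - δ) ≤
        μ {ω | (1 - ε) * (∫ ω', (∑ j ∈ S, X j ω') ∂μ) ≤ ∑ j ∈ S, X j ω ∧
               (∑ j ∈ S, X j ω) ≤ (1 + ε) * (∫ ω', (∑ j ∈ S, X j ω') ∂μ)} ∧
      (∑ j ∈ T, ∫ ω, X j ω ∂μ) ≤ ε * ∑ j : Fin n, ∫ ω, X j ω ∂μ := by
  classical
  have hE j := integral_mem_Icc_of_forall_mem (μ := μ) (hmeas j) (hrange j)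
  obtain ⟨j₀, hj₀⟩ := hc.1
  have hc1 : 1 ≤ c := hj₀ ▸ (one_le_div (hα j₀)).2 ((hE j₀).1.trans (hE j₀).2)
  have hβ j : β j ≤ c * α j := (div_le_iff₀ (hα j)).1 (hc.2 ⟨j, rfl⟩)
  have hδ : δ ≤ 1 :=
    hδ1.le.trans ((div_le_one (by positivity)).2 (by linarith [Real.add_one_le_exp 2]))
  set B := 16 * c ^ 2 / ε ^ 3 * Real.log (2 / δ)
  have hB : 8 ≤ B := eight_le_mul_log_two_div hc1 hε0 hε1.le hδ0 hδ
  obtain ⟨R, S, T, hRS, hRT, hST, hcover, hR, hS, hT⟩ := exists_partition_light_or_spread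
    (fun j => μ[X j]) (fun j => (hα j).le.trans (hE j).1) ⌊B⌋₊ hε0.le
  refine ⟨R, S, T, hRS, hRT, hST, hcover, (Nat.cast_le.2 hR).trans (Nat.floor_le (by linarith)),
    ?_, hT⟩
  rcases S.eq_empty_or_nonempty with rfl | hSne
  · simp [hδ0.le]
  · have ht : B - 1 < ⌊B⌋₊ := Nat.sub_one_lt_floor B
    refine isConcentrated_sum_of_forall_mul_le_sum hindep hmeas hrange hα (by linarith) hβ hSne
      (mul_pos hε0 (by linarith)) hε0 hδ0 hS ?_
    have hεB : ε ^ 3 * B = 16 * c ^ 2 * Real.log (2 / δ) := by simp only [B]; field_simp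
    have htB : ε ^ 3 * (B / 2) ≤ ε ^ 3 * ⌊B⌋₊ := by gcongr; linarith
    nlinarith [pow_pos hε0 3]

/-- **Partitioning Lemma.** Nonnegative independent random variables `X j` taking values
in `[α j, β j]` with `α j > 0`, `c = max_j β j / α j`, can be partitioned into three groups
`R`, `S`, `T` such that `R` is small, the sum over `S` is `(ε, δ)`-concentrated, and the
total expectation of `T` is at most an `ε` fraction of the total expectation. -/
theorem partitioning_lemma {Ω : Type*} [MeasurableSpace Ω] (μ : Measure Ω)
    [IsProbabilityMeasure μ] (n : ℕ) (hn : 1 ≤ n)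
    (X : Fin n → Ω → ℝ) (α β : Fin n → ℝ)
    (hα : ∀ j, 0 < α j)
    (hrange : ∀ j ω, X j ω ∈ Set.Icc (α j) (β j))
    (hmeas : ∀ j, Measurable (X j))
    (hint : ∀ j, Integrable (X j) μ)
    (hindep : iIndepFun X μ)
    (c : ℝ) (hc : IsGreatest (Set.range fun j => β j / α j) c)
    (ε δ : ℝ) (hε0 : 0 < ε) (hε1 : ε < 1)
    (hδ0 : 0 < δ) (hδ1 : δ < 1 / (2 * Real.exp 2)) :
    ∃ R S T : Finset (Fin n),
      Disjoint R S ∧ Disjoint R T ∧ Disjoint S T ∧ R ∪ S ∪ T = Finset.univ ∧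
      (R.card : ℝ) ≤ 16 * c ^ 2 / ε ^ 3 * Real.log (2 / δ) ∧
      ENNReal.ofReal (1 - δ) ≤
        μ {ω | (1 - ε) * (∫ ω', (∑ j ∈ S, X j ω') ∂μ) ≤ ∑ j ∈ S, X j ω ∧
               (∑ j ∈ S, X j ω) ≤ (1 + ε) * (∫ ω', (∑ j ∈ S, X j ω') ∂μ)} ∧
      (∑ j ∈ T, ∫ ω, X j ω ∂μ) ≤ ε * ∑ j : Fin n, ∫ ω, X j ω ∂μ :=
  partitioning_lemma_general μ n X α β hα hrange hmeas hindep c hc ε δ hε0 hε1 hδ0 hδ1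
end

section
/- Let ε ∈ (0,1). Let v_j, v_ℓ ∈ ℝ, and let p_j, p_ℓ, p'_j, p'_ℓ be real prices with p'_j ≥ 0 and p'_ℓ ≥ 0, such that p_j ∈ [(1−ε)·p'_j, (1−ε+ε²)·p'_j] and p_ℓ ∈ [(1−ε)·p'_ℓ, (1−ε+ε²)·p'_ℓ]. Suppose that v_j − p_j ≥ v_ℓ − p_ℓ (the bidder weakly prefers bundle j to bundle ℓ under prices p) and v_ℓ − p'_ℓ ≥ v_j − p'_j (the bidder weakly prefers bundle ℓ to bundle j under prices p'). Then p_j ≥ (1−2ε)·p'_ℓ. -/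
/-- **Price discretization lemma (Nisan).** If prices `p` approximate prices `p'` within a
multiplicative factor in `[1-ε, 1-ε+ε²]`, the bidder buys bundle `j` under `p` and bundle
`ℓ` under `p'`, then `p_j ≥ (1-2ε) p'_ℓ`. -/
theorem price_discretization (ε vj vl pj pl pj' pl' : ℝ)
    (hε0 : 0 < ε) (hε1 : ε < 1)
    (hpj' : 0 ≤ pj') (hpl' : 0 ≤ pl')
    (hpj_lb : (1 - ε) * pj' ≤ pj) (hpj_ub : pj ≤ (1 - ε + ε ^ 2) * pj')
    (hpl_lb : (1 - ε) * pl' ≤ pl) (hpl_ub : pl ≤ (1 - ε + ε ^ 2) * pl')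
    (hbuy_j : vj - pj ≥ vl - pl)
    (hbuy_l : vl - pl' ≥ vj - pj') :
    pj ≥ (1 - 2 * ε) * pl' := by
  nlinarith [sq_nonneg ε, mul_nonneg hpl' hpl', sq_nonneg (1-ε), mul_nonneg (sq_nonneg ε) hpl']
end

section
/- Let ε ∈ (0,1) and n ≥ 1. Let v ∈ ℝⁿ with v_t ≥ 0 for all t. Let q_j, q_ℓ, q'_j, q'_ℓ ∈ ℝⁿ be vectors with nonnegative entries such that (1+ε−ε²)·q_{j,t} ≤ q'_{j,t} ≤ (1+ε)·q_{j,t} and (1+ε−ε²)·q_{ℓ,t} ≤ q'_{ℓ,t} ≤ (1+ε)·q_{ℓ,t} for every coordinate t, and let p_j, p_ℓ ∈ ℝ. Suppose v·q_j − p_j ≥ v·q_ℓ − p_ℓ and v·q'_ℓ − p_ℓ ≥ v·q'_j − p_j. Then v·q_ℓ ≥ (1−ε)·(v·q_j) and p_ℓ ≥ p_j − ε·(v·q_j). -/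
open Finset

/-- **Lottery discretization lemma (deterministic core).** If the probability vectors of
two lotteries are rounded up by a factor in `[1+ε-ε², 1+ε]` (prices unchanged), and a
utility-maximizing bidder buys lottery `j` before the rounding and lottery `ℓ` after, then
`v·q_ℓ ≥ (1-ε) v·q_j` and `p_ℓ ≥ p_j - ε (v·q_j)`. -/
theorem lottery_discretization (ε : ℝ) (hε0 : 0 < ε) (hε1 : ε < 1)
    (n : ℕ) (hn : 1 ≤ n)
    (v qj ql qj' ql' : Fin n → ℝ) (pj pl : ℝ)
    (hv : ∀ t, 0 ≤ v t)
    (hqj : ∀ t, 0 ≤ qj t) (hql : ∀ t, 0 ≤ ql t)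
    (hqj' : ∀ t, 0 ≤ qj' t) (hql' : ∀ t, 0 ≤ ql' t)
    (hj_lb : ∀ t, (1 + ε - ε ^ 2) * qj t ≤ qj' t) (hj_ub : ∀ t, qj' t ≤ (1 + ε) * qj t)
    (hl_lb : ∀ t, (1 + ε - ε ^ 2) * ql t ≤ ql' t) (hl_ub : ∀ t, ql' t ≤ (1 + ε) * ql t)
    (hbuy_j : (∑ t, v t * qj t) - pj ≥ (∑ t, v t * ql t) - pl)
    (hbuy_l : (∑ t, v t * ql' t) - pl ≥ (∑ t, v t * qj' t) - pj) :
    (∑ t, v t * ql t) ≥ (1 - ε) * (∑ t, v t * qj t) ∧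
    pl ≥ pj - ε * (∑ t, v t * qj t) := by
  have hVj : 0 ≤ ∑ t, v t * qj t :=
    Finset.sum_nonneg fun t _ => mul_nonneg (hv t) (hqj t)
  have h1 : (1 + ε - ε ^ 2) * (∑ t, v t * qj t) ≤ ∑ t, v t * qj' t := by
    rw [Finset.mul_sum]
    exact Finset.sum_le_sum fun t _ => by
      have := hj_lb t; nlinarith [hv t]
  have h2 : (∑ t, v t * ql' t) ≤ (1 + ε) * (∑ t, v t * ql t) := by
    rw [Finset.mul_sum]
    exact Finset.sum_le_sum fun t _ => by
      have := hl_ub t; nlinarith [hv t]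
  constructor
  · nlinarith
  · nlinarith
end

section
/- Let W be a nonnegative integrable real random variable that is (ε, δ)-concentrated, where 0 < ε < 1/3 and 0 < δ < 1. Let k ≥ 1 be an integer and set ŝ = (1−ε)·E[W]. Then E[ (k·ŝ − (k−1)·W) · 1_{W ≥ ŝ} ] ≥ (1 − k·ε − k·δ) · E[W]. -/
/-!
On the event `S = {ŝ ≤ W}` the mechanism collects `k ŝ - (k - 1) W`, so its expected revenue is
`k ŝ μ(S) - (k - 1) ∫_S W ≥ k ŝ (1 - δ) - (k - 1) E[W]`, using `μ(S) ≥ 1 - δ` (concentration) and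
`∫_S W ≤ E[W]` (nonnegativity). With `ŝ = (1 - ε) E[W]` the right-hand side equals
`(1 - kε - kδ + kεδ) E[W]`.
-/

open MeasureTheory

namespace MeasureTheory

variable {Ω : Type*} [MeasurableSpace Ω] {μ : Measure Ω} {X : Ω → ℝ}

theorem integral_ite_le_sub_mul [IsFiniteMeasure μ] (hX : Integrable X μ) (s c b : ℝ) :
    ∫ ω, (if s ≤ X ω then c - b * X ω else 0) ∂μ =
      c * μ.real {ω | s ≤ X ω} - b * ∫ ω in {ω | s ≤ X ω}, X ω ∂μ := by
  have hS : NullMeasurableSet {ω | s ≤ X ω} μ :=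
    nullMeasurableSet_le aemeasurable_const hX.aemeasurable
  have hind : (fun ω => if s ≤ X ω then c - b * X ω else 0) =
      {ω | s ≤ X ω}.indicator (fun ω => c - b * X ω) := rfl
  rw [hind, integral_indicator₀ hS, integral_sub (integrable_const c) (hX.restrict.const_mul b),
    integral_const_mul, setIntegral_const, smul_eq_mul, mul_comm]

theorem le_integral_ite_le_sub_mul [IsFiniteMeasure μ] (hX0 : 0 ≤ᵐ[μ] X) (hX : Integrable X μ)
    {s p k : ℝ} (hs : 0 ≤ s) (hk : 1 ≤ k) (hp : ENNReal.ofReal p ≤ μ {ω | s ≤ X ω}) :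
    k * s * p - (k - 1) * ∫ ω, X ω ∂μ ≤
      ∫ ω, (if s ≤ X ω then k * s - (k - 1) * X ω else 0) ∂μ := by
  rw [integral_ite_le_sub_mul hX]
  have hp' : p ≤ μ.real {ω | s ≤ X ω} :=
    (ENNReal.ofReal_le_iff_le_toReal (measure_ne_top _ _)).1 hp
  have hXS : ∫ ω in {ω | s ≤ X ω}, X ω ∂μ ≤ ∫ ω, X ω ∂μ := setIntegral_le_integral hX hX0
  gcongr

end MeasureTheory

theorem reserve_welfare_revenue_general {Ω : Type*} [MeasurableSpace Ω] (μ : Measure Ω)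
    [IsProbabilityMeasure μ] (W : Ω → ℝ)
    (hWnonneg : ∀ ω, 0 ≤ W ω) (hWint : Integrable W μ)
    (ε δ : ℝ) (hε0 : 0 < ε) (hε1 : ε < 1/3) (hδ0 : 0 < δ)
    (hconc : ENNReal.ofReal (1 - δ) ≤
      μ {ω | (1 - ε) * (∫ ω', W ω' ∂μ) ≤ W ω ∧ W ω ≤ (1 + ε) * (∫ ω', W ω' ∂μ)})
    (k : ℕ) (hk : 1 ≤ k) (shat : ℝ) (hshat : shat = (1 - ε) * ∫ ω', W ω' ∂μ) :
    (1 - k * ε - k * δ) * (∫ ω', W ω' ∂μ) ≤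
      ∫ ω, (if shat ≤ W ω then k * shat - (k - 1) * W ω else 0) ∂μ := by
  subst hshat
  set m := ∫ ω, W ω ∂μ
  have hm : 0 ≤ m := integral_nonneg hWnonneg
  have hrev := le_integral_ite_le_sub_mul (ae_of_all μ hWnonneg) hWint
    (mul_nonneg (by linarith) hm) (by exact_mod_cast hk : (1 : ℝ) ≤ k)
    (hconc.trans (measure_mono fun ω hω => hω.1))
  refine le_trans ?_ hrev
  have hεδ : 0 ≤ k * ε * δ * m := by positivity
  linear_combination hεδ

/-- **Revenue of the reserve-welfare mechanism.** If the social welfare `W` is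
`(ε, δ)`-concentrated, `0 < ε < 1/3`, `0 < δ < 1`, and `ŝ = (1-ε) E[W]`, then the
expected revenue `E[(k ŝ - (k-1) W) 1_{W ≥ ŝ}]` is at least `(1 - kε - kδ) E[W]`. -/
theorem reserve_welfare_revenue {Ω : Type*} [MeasurableSpace Ω] (μ : Measure Ω)
    [IsProbabilityMeasure μ] (W : Ω → ℝ)
    (hWnonneg : ∀ ω, 0 ≤ W ω) (hWmeas : Measurable W) (hWint : Integrable W μ)
    (ε δ : ℝ) (hε0 : 0 < ε) (hε1 : ε < 1/3) (hδ0 : 0 < δ) (hδ1 : δ < 1)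
    (hconc : ENNReal.ofReal (1 - δ) ≤
      μ {ω | (1 - ε) * (∫ ω', W ω' ∂μ) ≤ W ω ∧ W ω ≤ (1 + ε) * (∫ ω', W ω' ∂μ)})
    (k : ℕ) (hk : 1 ≤ k) (shat : ℝ) (hshat : shat = (1 - ε) * ∫ ω', W ω' ∂μ) :
    (1 - k * ε - k * δ) * (∫ ω', W ω' ∂μ) ≤
      ∫ ω, (if shat ≤ W ω then k * shat - (k - 1) * W ω else 0) ∂μ :=
  reserve_welfare_revenue_general μ W hWnonneg hWint ε δ hε0 hε1 hδ0 hconc k hk shat hshat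
end

section
/- Let 0 < ε < 1, let m be an integer with m ≥ (12/ε)^{12/ε}, and let n ≥ 1 items be given. Suppose for each item j ∈ {1,…,n} the values v_{1j}, …, v_{mj} of the m bidders are i.i.d. nonnegative real random variables with a common MHR distribution F_j (the distributions F_j may differ across items). Then there exist reserve prices r_1, …, r_n ≥ 0 such that ∑_{j=1}^n Pr[ max_i v_{ij} ≥ r_j ] · r_j ≥ (1−ε) · ∑_{j=1}^n E[ max_i v_{ij} ]. -/
/-!
MHR makes the survival function `G = 1 - F` log-concave: on `(x, y]` the density is squeezed
between `h(x) G(y)` and `h(y) G(x)` (`h` the hazard rate), and a derivative-free Grönwall argument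
turns this into `h(a) (b - a) ≤ log G(a) - log G(b) ≤ h(b) (b - a)`, so secant slopes of `log G`
decrease.

For one item with `m` bidders pick `t > 0` with `G(t) = 1/m`. Since `G(0) = 1`, log-concavity gives
`G(y) ≤ m^(-y/t)` for `y ≥ t`; with the union bound `Pr[max > y] ≤ m G(y)` this yields
`E[max] ≤ t (1 + 1/log m)`. It also gives `G((1-δ) t) ≥ m^(δ-1)`, so with reserve
`r = (1-δ) t` the item is sold with probability at least `1 - (1 - m^(δ-1))^m ≥ 1 - exp(-m^δ)`.
For `δ = ε/3` the bound on `m` makes both losses at most `δ`, and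
`(1 - 3δ)(1 + δ) ≤ (1 - δ)^2`.
-/

open MeasureTheory ProbabilityTheory Finset Real Filter Topology

theorem mul_pow_le_of_mul_one_add_le {u : ℝ → ℝ} {a b κ : ℝ} (hab : a ≤ b)
    (h : ∀ x y, a ≤ x → x ≤ y → y ≤ b → u x * (1 + κ * (y - x)) ≤ u y)
    {N : ℕ} (hN : 0 < N) (hq : 0 ≤ 1 + κ * ((b - a) / N)) :
    u a * (1 + κ * ((b - a) / N)) ^ N ≤ u b := by
  set Δ := (b - a) / N
  have hΔ : 0 ≤ Δ := div_nonneg (sub_nonneg.2 hab) N.cast_nonneg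
  have hNΔ : N * Δ = b - a := mul_div_cancel₀ _ (by positivity)
  have key : ∀ k ≤ N, u a * (1 + κ * Δ) ^ k ≤ u (a + k * Δ) := by
    intro k hk
    induction k with
    | zero => simp
    | succ k ih =>
      have hkN : ((k : ℝ) + 1) * Δ ≤ N * Δ := by gcongr; exact_mod_cast hk
      calc u a * (1 + κ * Δ) ^ (k + 1) = u a * (1 + κ * Δ) ^ k * (1 + κ * Δ) := by ring
        _ ≤ u (a + k * Δ) * (1 + κ * Δ) := mul_le_mul_of_nonneg_right (ih (by omega)) hq
        _ = u (a + k * Δ) * (1 + κ * ((a + (k + 1) * Δ) - (a + k * Δ))) := by ring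
        _ ≤ u (a + (k + 1 : ℕ) * Δ) := by
          push_cast
          exact h _ _ (by nlinarith [k.cast_nonneg (α := ℝ)]) (by linarith) (by linarith)
  simpa [hNΔ] using key N le_rfl

theorem mul_exp_le_of_mul_one_add_le {u : ℝ → ℝ} {a b κ : ℝ} (hab : a ≤ b)
    (h : ∀ x y, a ≤ x → x ≤ y → y ≤ b → u x * (1 + κ * (y - x)) ≤ u y) :
    u a * exp (κ * (b - a)) ≤ u b := by
  have hlim : Tendsto (fun N : ℕ => u a * (1 + κ * (b - a) / N) ^ N) atTop
      (𝓝 (u a * exp (κ * (b - a)))) :=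
    (tendsto_one_add_div_pow_exp _).const_mul _
  have hsmall : ∀ᶠ N : ℕ in atTop, -1 < κ * (b - a) / N :=
    (tendsto_const_div_atTop_nhds_zero_nat _).eventually (Ioi_mem_nhds (by norm_num))
  refine le_of_tendsto hlim ?_
  filter_upwards [hsmall, eventually_gt_atTop 0] with N hN hN0
  rw [mul_div_assoc] at hN ⊢
  exact mul_pow_le_of_mul_one_add_le hab h hN0 (by linarith)

noncomputable def survival (D : Measure ℝ) (x : ℝ) : ℝ := D.real (Set.Ioi x)

/-- The hazard rate `f / (1 - F)`, cut off at `0`: a density only enters `withDensity` through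
its positive part. -/
noncomputable def hazardRate (D : Measure ℝ) (f : ℝ → ℝ) (x : ℝ) : ℝ :=
  max (f x / survival D x) 0

section

variable {D : Measure ℝ} {f : ℝ → ℝ}

theorem survival_nonneg (x : ℝ) : 0 ≤ survival D x := measureReal_nonneg

theorem hazardRate_nonneg (x : ℝ) : 0 ≤ hazardRate D f x := le_max_right _ _

section FiniteMeasure

variable [IsFiniteMeasure D]

theorem survival_antitone : Antitone (survival D) := fun _ _ hxy =>
  measureReal_mono (Set.Ioi_subset_Ioi hxy)

theorem survival_sub_survival {x y : ℝ} (hxy : x ≤ y) :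
    survival D x - survival D y = D.real (Set.Ioc x y) := by
  rw [survival, survival, ← measureReal_sdiff (Set.Ioi_subset_Ioi hxy) measurableSet_Ioi,
    Set.Ioi_sdiff_Ioi]

theorem continuous_survival [NullSingletonClass D] : Continuous (survival D) := by
  have h : survival D = fun b => survival D 0 - ∫ _ in (0 : ℝ)..b, (1 : ℝ) ∂D := by
    ext b
    rw [intervalIntegral.integral_const', smul_eq_mul, mul_one]
    rcases le_total 0 b with hb | hb
    · rw [← survival_sub_survival hb, Set.Ioc_eq_empty (not_lt.2 hb)]
      simp
    · rw [← survival_sub_survival hb, Set.Ioc_eq_empty (not_lt.2 hb)]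
      simp
  rw [h]
  exact continuous_const.sub
    (intervalIntegral.continuous_primitive (fun _ _ => intervalIntegrable_const) 0)

end FiniteMeasure

section Density

variable (hpdf : D = volume.withDensity fun x => ENNReal.ofReal (f x))
include hpdf

theorem measureReal_Ioc_le_of_le {x y c : ℝ} (hxy : x ≤ y) (hc : 0 ≤ c)
    (h : ∀ u ∈ Set.Ioc x y, f u ≤ c) : D.real (Set.Ioc x y) ≤ c * (y - x) := by
  have hle : D (Set.Ioc x y) ≤ ENNReal.ofReal (c * (y - x)) := by
    rw [hpdf, withDensity_apply _ measurableSet_Ioc]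
    calc ∫⁻ u in Set.Ioc x y, ENNReal.ofReal (f u)
        ≤ ∫⁻ _ in Set.Ioc x y, ENNReal.ofReal c :=
          setLIntegral_mono' measurableSet_Ioc fun u hu => ENNReal.ofReal_le_ofReal (h u hu)
      _ = ENNReal.ofReal (c * (y - x)) := by
          rw [setLIntegral_const, Real.volume_Ioc, ENNReal.ofReal_mul hc]
  exact ENNReal.toReal_le_of_le_ofReal (mul_nonneg hc (sub_nonneg.2 hxy)) hle

theorem le_measureReal_Ioc_of_le [IsFiniteMeasure D] {x y c : ℝ} (hc : 0 ≤ c)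
    (h : ∀ u ∈ Set.Ioc x y, c ≤ max (f u) 0) : c * (y - x) ≤ D.real (Set.Ioc x y) := by
  rcases le_total y x with hyx | hxy
  · exact (mul_nonpos_of_nonneg_of_nonpos hc (sub_nonpos.2 hyx)).trans measureReal_nonneg
  have hle : ENNReal.ofReal (c * (y - x)) ≤ D (Set.Ioc x y) := by
    rw [hpdf, withDensity_apply _ measurableSet_Ioc]
    calc ENNReal.ofReal (c * (y - x)) = ∫⁻ _ in Set.Ioc x y, ENNReal.ofReal c := by
          rw [setLIntegral_const, Real.volume_Ioc, ENNReal.ofReal_mul hc]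
      _ ≤ ∫⁻ u in Set.Ioc x y, ENNReal.ofReal (f u) :=
          setLIntegral_mono' measurableSet_Ioc fun u hu =>
            ENNReal.ofReal_le_ofReal_iff'.2 (le_max_iff.1 (h u hu))
  exact (ENNReal.ofReal_le_iff_le_toReal (measure_ne_top D _)).1 hle

end Density

theorem hazardRate_monotoneOn
    (hmono : MonotoneOn (fun x => f x / survival D x) {x | 0 < survival D x}) :
    MonotoneOn (hazardRate D f) {x | 0 < survival D x} :=
  fun _ ha _ hb hab => max_le_max (hmono ha hb hab) le_rfl

theorem hazardRate_mul_survival {u : ℝ} (hu : 0 < survival D u) :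
    hazardRate D f u * survival D u = max (f u) 0 := by
  rw [hazardRate, max_mul_of_nonneg _ _ hu.le, div_mul_cancel₀ _ hu.ne', zero_mul]

section Hazard

variable [IsFiniteMeasure D] (hpdf : D = volume.withDensity fun x => ENNReal.ofReal (f x))
  (hmono : MonotoneOn (fun x => f x / survival D x) {x | 0 < survival D x})
include hpdf hmono

theorem survival_mul_one_sub_le {b x y : ℝ} (hb : 0 < survival D b) (hxy : x ≤ y)
    (hyb : y ≤ b) :
    survival D x * (1 + -hazardRate D f b * (y - x)) ≤ survival D y := by
  have hdensity : ∀ u ∈ Set.Ioc x y, f u ≤ hazardRate D f b * survival D x := by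
    intro u hu
    have hGu : 0 < survival D u := hb.trans_le (survival_antitone (hu.2.trans hyb))
    calc f u ≤ max (f u) 0 := le_max_left _ _
      _ = hazardRate D f u * survival D u := (hazardRate_mul_survival hGu).symm
      _ ≤ hazardRate D f b * survival D x :=
          mul_le_mul (hazardRate_monotoneOn hmono hGu hb (hu.2.trans hyb))
            (survival_antitone hu.1.le) (survival_nonneg _) (hazardRate_nonneg _)
  have := measureReal_Ioc_le_of_le hpdf hxy
    (mul_nonneg (hazardRate_nonneg _) (survival_nonneg _)) hdensity
  rw [← survival_sub_survival hxy] at this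
  linarith

theorem survival_mul_one_add_le {a x y : ℝ} (hy : 0 < survival D y) (hax : a ≤ x)
    (hxy : x ≤ y) :
    survival D y * (1 + hazardRate D f a * (y - x)) ≤ survival D x := by
  have hGa : 0 < survival D a := hy.trans_le (survival_antitone (hax.trans hxy))
  have hdensity : ∀ u ∈ Set.Ioc x y, hazardRate D f a * survival D y ≤ max (f u) 0 := by
    intro u hu
    have hGu : 0 < survival D u := hy.trans_le (survival_antitone hu.2)
    rw [← hazardRate_mul_survival hGu]
    exact mul_le_mul (hazardRate_monotoneOn hmono hGa hGu (hax.trans hu.1.le))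
      (survival_antitone hu.2) (survival_nonneg _) (hazardRate_nonneg _)
  have := le_measureReal_Ioc_of_le hpdf
    (mul_nonneg (hazardRate_nonneg _) (survival_nonneg _)) hdensity
  rw [← survival_sub_survival hxy] at this
  linarith

theorem log_survival_sub_le {a b : ℝ} (hab : a ≤ b) (hb : 0 < survival D b) :
    log (survival D a) - log (survival D b) ≤ hazardRate D f b * (b - a) := by
  have hGa : 0 < survival D a := hb.trans_le (survival_antitone hab)
  have := log_le_log (by positivity) <| mul_exp_le_of_mul_one_add_le hab fun _ _ _ hxy hyb =>
    survival_mul_one_sub_le hpdf hmono hb hxy hyb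
  rw [log_mul hGa.ne' (exp_pos _).ne', log_exp] at this
  linarith

theorem hazardRate_mul_le_log_survival_sub {a b : ℝ} (hab : a ≤ b) (hb : 0 < survival D b) :
    hazardRate D f a * (b - a) ≤ log (survival D a) - log (survival D b) := by
  have hexp := mul_exp_le_of_mul_one_add_le (u := fun x => survival D (-x))
    (κ := hazardRate D f a) (neg_le_neg hab) fun x y hbx hxy hya => by
      simpa [sub_eq_add_neg, add_comm] using survival_mul_one_add_le hpdf hmono
        (hb.trans_le (survival_antitone (neg_le.1 hbx))) (le_neg.1 hya) (neg_le_neg hxy)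
  simp only [neg_neg] at hexp
  have := log_le_log (by positivity) hexp
  rw [log_mul hb.ne' (exp_pos _).ne', log_exp] at this
  linarith

theorem concaveOn_log_survival :
    ConcaveOn ℝ {x | 0 < survival D x} fun x => log (survival D x) := by
  have hlower : IsLowerSet {x | 0 < survival D x} := fun _ _ hba hb =>
    lt_of_lt_of_le hb (survival_antitone hba)
  refine concaveOn_of_slope_anti_adjacent hlower.ordConnected.convex fun {x y z} hx hz hxy hyz => ?_
  have hy : 0 < survival D y := hlower hyz.le hz
  have hyz' := hazardRate_mul_le_log_survival_sub hpdf hmono hyz.le hz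
  have hxy' := log_survival_sub_le hpdf hmono hxy.le hy
  rw [div_le_iff₀ (sub_pos.2 hyz), div_mul_eq_mul_div, le_div_iff₀ (sub_pos.2 hxy)]
  nlinarith [mul_le_mul_of_nonneg_right hyz' (sub_pos.2 hxy).le,
    mul_le_mul_of_nonneg_right hxy' (sub_pos.2 hyz).le]

end Hazard

section ProbabilityMeasure

variable [IsProbabilityMeasure D]

theorem survival_eq_one_sub (x : ℝ) : survival D x = 1 - D.real (Set.Iic x) := by
  rw [survival, ← Set.compl_Iic, probReal_compl_eq_one_sub measurableSet_Iic]

theorem tendsto_survival_atTop : Tendsto (survival D) atTop (𝓝 0) := by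
  have h := (tendsto_cdf_atTop (μ := D)).const_sub 1
  rw [sub_self] at h
  refine h.congr fun x => ?_
  rw [cdf_eq_real, survival_eq_one_sub]

theorem monotoneOn_div_survival {F : ℝ → ℝ}
    (hcdf : ∀ x, F x = (D (Set.Iic x)).toReal)
    (hMHR : MonotoneOn (fun x => f x / (1 - F x)) {x | F x < 1}) :
    MonotoneOn (fun x => f x / survival D x) {x | 0 < survival D x} := by
  have hF : ∀ x, survival D x = 1 - F x := fun x => by
    rw [survival_eq_one_sub, hcdf, measureReal_def]
  simpa only [hF, sub_pos] using hMHR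

variable [NullSingletonClass D]

theorem survival_zero (h0 : D (Set.Iio 0) = 0) : survival D 0 = 1 := by
  rw [survival_eq_one_sub, measureReal_def,
    ← measure_congr (Iio_ae_eq_Iic' (measure_singleton 0)), h0, ENNReal.toReal_zero, sub_zero]

theorem exists_pos_survival_eq (h0 : D (Set.Iio 0) = 0) {c : ℝ} (hc0 : 0 < c) (hc1 : c < 1) :
    ∃ t, 0 < t ∧ survival D t = c := by
  obtain ⟨X, hX, hX0⟩ := (((tendsto_survival_atTop (D := D)).eventually
    (eventually_le_nhds hc0)).and (eventually_ge_atTop 0)).exists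
  obtain ⟨t, ht, htc⟩ := intermediate_value_Icc' hX0 continuous_survival.continuousOn
    ⟨hX, (survival_zero h0).symm ▸ hc1.le⟩
  refine ⟨t, ht.1.lt_of_ne ?_, htc⟩
  rintro rfl
  rw [survival_zero h0] at htc
  exact hc1.ne' htc

end ProbabilityMeasure

section LogConcave

variable {g : ℝ → ℝ} (hg : ConcaveOn ℝ {x | 0 < g x} fun x => log (g x)) (hg0 : g 0 = 1)
include hg hg0

theorem exp_mul_log_le_of_concaveOn_log {t θ : ℝ} (ht : 0 < g t) (hθ0 : 0 ≤ θ)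
    (hθ1 : θ ≤ 1) :
    exp (θ * log (g t)) ≤ g (θ * t) := by
  have h0 : (0 : ℝ) ∈ {x | 0 < g x} := by simp [hg0]
  have hθt : θ * t ∈ {x | 0 < g x} := by
    simpa using hg.1 ht h0 hθ0 (sub_nonneg.2 hθ1) (by ring)
  have := hg.2 ht h0 hθ0 (sub_nonneg.2 hθ1) (by ring)
  simp only [smul_eq_mul, mul_zero, add_zero, hg0, log_one] at this
  exact (exp_le_exp.2 this).trans_eq (exp_log hθt)

theorem le_exp_div_mul_log_of_concaveOn_log {t y : ℝ} (ht : 0 < t) (hty : t ≤ y) :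
    g y ≤ exp (y / t * log (g t)) := by
  rcases le_or_gt (g y) 0 with hy | hy
  · exact hy.trans (exp_pos _).le
  have hy0 : 0 < y := ht.trans_le hty
  have h0 : (0 : ℝ) ∈ {x | 0 < g x} := by simp [hg0]
  have := hg.2 hy h0 (show 0 ≤ t / y by positivity)
    (sub_nonneg.2 ((div_le_one hy0).2 hty)) (add_sub_cancel _ 1)
  simp only [smul_eq_mul, mul_zero, add_zero, hg0, log_one, div_mul_cancel₀ _ hy0.ne'] at this
  rw [← exp_log hy]
  gcongr
  rw [div_mul_eq_mul_div, le_div_iff₀ ht]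
  calc log (g y) * t = y * (t / y * log (g y)) := by field_simp
    _ ≤ y * log (g t) := by gcongr

end LogConcave

theorem exists_survival_quantile_rpow_bounds [IsProbabilityMeasure D]
    (hpdf : D = volume.withDensity fun x => ENNReal.ofReal (f x))
    (hmono : MonotoneOn (fun x => f x / survival D x) {x | 0 < survival D x})
    (h0 : D (Set.Iio 0) = 0) {m : ℝ} (hm : 1 < m) :
    ∃ t, 0 < t ∧ (∀ y, t ≤ y → survival D y ≤ m ^ (-(y / t))) ∧
      ∀ θ, 0 ≤ θ → θ ≤ 1 → m ^ (-θ) ≤ survival D (θ * t) := by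
  have hm0 : 0 < m := by linarith
  have : NullSingletonClass D := hpdf ▸ inferInstance
  obtain ⟨t, ht0, hGt⟩ := exists_pos_survival_eq h0 (inv_pos.2 hm0) (inv_lt_one_of_one_lt₀ hm)
  have hconc := concaveOn_log_survival hpdf hmono
  have hlogGt : log (survival D t) = -log m := by rw [hGt, log_inv]
  refine ⟨t, ht0, fun y hty => ?_, fun θ hθ0 hθ1 => ?_⟩
  · rw [rpow_def_of_pos hm0, show log m * -(y / t) = y / t * log (survival D t) by
      rw [hlogGt]; ring]
    exact le_exp_div_mul_log_of_concaveOn_log hconc (survival_zero h0) ht0 hty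
  · rw [rpow_def_of_pos hm0, show log m * -θ = θ * log (survival D t) by rw [hlogGt]; ring]
    exact exp_mul_log_le_of_concaveOn_log hconc (survival_zero h0) (hGt ▸ inv_pos.2 hm0) hθ0 hθ1

section MaxOfIID

variable {Ω ι : Type*} [MeasurableSpace Ω] {μ : Measure Ω} [Fintype ι] {X : ι → Ω → ℝ}
  {M : Ω → ℝ} (hM : ∀ ω, IsGreatest (Set.range fun i => X i ω) (M ω))
  (hX : ∀ i, Measurable (X i)) (hD : ∀ i, μ.map (X i) = D)
include hM hX hD

theorem measureReal_lt_max_le [IsFiniteMeasure μ] (x : ℝ) :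
    μ.real {ω | x < M ω} ≤ Fintype.card ι * survival D x := by
  have hunion : {ω | x < M ω} = ⋃ i, X i ⁻¹' Set.Ioi x := by
    ext ω
    obtain ⟨⟨i, hi⟩, hle⟩ := hM ω
    simp only at hi
    simp only [Set.mem_ofPred_eq, Set.mem_iUnion, Set.mem_preimage, Set.mem_Ioi]
    exact ⟨fun h => ⟨i, hi ▸ h⟩, fun ⟨j, hj⟩ => hj.trans_le (hle ⟨j, rfl⟩)⟩
  calc μ.real {ω | x < M ω} ≤ ∑ i, μ.real (X i ⁻¹' Set.Ioi x) :=
        hunion ▸ measureReal_iUnion_fintype_le _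
    _ = Fintype.card ι * survival D x := by
        simp only [← map_measureReal_apply (hX _) measurableSet_Ioi, hD, Finset.sum_const,
          Finset.card_univ, nsmul_eq_mul, survival]

theorem one_sub_exp_le_measureReal_le_max [IsProbabilityMeasure μ] [IsProbabilityMeasure D]
    (hind : iIndepFun X μ) (r : ℝ) :
    1 - exp (-(Fintype.card ι * survival D r)) ≤ μ.real {ω | r ≤ M ω} := by
  have hinter : {ω | M ω < r} = ⋂ i, X i ⁻¹' Set.Iio r := by
    ext ω
    obtain ⟨⟨i, hi⟩, hle⟩ := hM ω
    simp only at hi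
    simp only [Set.mem_ofPred_eq, Set.mem_iInter, Set.mem_preimage, Set.mem_Iio]
    exact ⟨fun h j => (hle ⟨j, rfl⟩).trans_lt h, fun h => hi ▸ h i⟩
  have hlt : μ.real {ω | M ω < r} = D.real (Set.Iio r) ^ Fintype.card ι := by
    rw [measureReal_def, hinter, hind.meas_iInter fun i => ⟨Set.Iio r, measurableSet_Iio, rfl⟩]
    simp only [← Measure.map_apply (hX _) measurableSet_Iio, hD, Finset.prod_const,
      Finset.card_univ, ENNReal.toReal_pow, measureReal_def]
  have hcompl : {ω | r ≤ M ω} = {ω | M ω < r}ᶜ := by ext; simp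
  rw [hcompl, probReal_compl_eq_one_sub (hinter ▸ .iInter fun i => hX i measurableSet_Iio), hlt,
    neg_mul_eq_mul_neg, exp_nat_mul]
  gcongr
  calc D.real (Set.Iio r) ≤ 1 - survival D r :=
        (measureReal_mono Set.Iio_subset_Iic_self).trans_eq (by rw [survival_eq_one_sub]; ring)
    _ ≤ exp (-survival D r) := one_sub_le_exp_neg _

end MaxOfIID

theorem map_Iio_zero {Ω : Type*} [MeasurableSpace Ω] {μ : Measure Ω} {X : Ω → ℝ}
    (hX : Measurable X) (hX0 : ∀ ω, 0 ≤ X ω) : μ.map X (Set.Iio 0) = 0 := by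
  have hempty : X ⁻¹' Set.Iio 0 = ∅ :=
    Set.eq_empty_of_forall_notMem fun ω (hω : X ω < 0) => (hX0 ω).not_gt hω
  rw [Measure.map_apply hX measurableSet_Iio, hempty, measure_empty]

theorem integral_le_add_inv_of_tail_le_exp {Ω : Type*} [MeasurableSpace Ω] {μ : Measure Ω}
    [IsProbabilityMeasure μ] {M : Ω → ℝ} (hMint : Integrable M μ) {t c : ℝ} (hc : 0 < c)
    (htail : ∀ x, t < x → μ.real {ω | x < M ω} ≤ exp (-c * (x - t))) :
    ∫ ω, M ω ∂μ ≤ t + c⁻¹ := by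
  have hexcess : Integrable (fun ω => max (M ω - t) 0) μ :=
    (hMint.sub (integrable_const t)).pos_part
  have hexcess_int : ∫ ω, max (M ω - t) 0 ∂μ ≤ c⁻¹ := by
    rw [hexcess.integral_eq_integral_meas_lt (Eventually.of_forall fun _ => le_max_right _ _)]
    calc ∫ x in Set.Ioi 0, μ.real {ω | x < max (M ω - t) 0}
        ≤ ∫ x in Set.Ioi 0, exp (-c * x) := by
          refine integral_mono_of_nonneg (Eventually.of_forall fun _ => measureReal_nonneg)
            (exp_neg_integrableOn_Ioi 0 hc) ?_
          filter_upwards [ae_restrict_mem measurableSet_Ioi] with x (hx : 0 < x)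
          have hset : {ω | x < max (M ω - t) 0} = {ω | x + t < M ω} := by
            ext ω
            simp only [Set.mem_ofPred_eq, lt_max_iff, hx.not_gt, or_false]
            constructor <;> intro h <;> linarith
          rw [hset]
          simpa using htail (x + t) (by linarith)
      _ = c⁻¹ := by
          rw [integral_exp_mul_Ioi (neg_lt_zero.2 hc)]
          simp
  calc ∫ ω, M ω ∂μ ≤ ∫ ω, (t + max (M ω - t) 0) ∂μ :=
        integral_mono hMint ((integrable_const t).add hexcess) fun ω =>
          show M ω ≤ t + max (M ω - t) 0 by linarith [le_max_left (M ω - t) 0]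
    _ ≤ t + c⁻¹ := by
        rw [integral_add (integrable_const t) hexcess, integral_const, probReal_univ,
          one_smul]
        linarith

theorem one_le_mul_log_and_exp_neg_rpow_le {ε : ℝ} (hε0 : 0 < ε) (hε4 : ε ≤ 4) {m : ℝ}
    (hm : (12 / ε) ^ (12 / ε) ≤ m) :
    1 ≤ ε / 3 * log m ∧ exp (-m ^ (ε / 3)) ≤ ε / 3 := by
  set b := 12 / ε with hb
  have hb3 : 3 ≤ b := by rw [hb, le_div_iff₀ hε0]; linarith
  have hb0 : 0 < b := by linarith
  have hlogb : 1 ≤ log b := by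
    rw [le_log_iff_exp_le hb0]
    linarith [exp_one_lt_d9]
  have hm0 : 0 < m := (rpow_pos_of_pos hb0 b).trans_le hm
  have hlogm : b * log b ≤ log m := by
    rw [← log_rpow hb0]
    exact log_le_log (rpow_pos_of_pos hb0 b) hm
  have hδb : ε / 3 * b = 4 := by rw [hb]; field_simp; norm_num
  have hδlogm : 4 * log b ≤ ε / 3 * log m := by
    rw [← hδb, mul_assoc]
    gcongr
  refine ⟨by linarith, ?_⟩
  have hbm : b ≤ m ^ (ε / 3) := by
    rw [rpow_def_of_pos hm0, ← exp_log hb0]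
    gcongr
    linarith
  have hlog3 : log (3 / ε) ≤ b := by
    have := log_le_sub_one_of_pos (show 0 < 3 / ε by positivity)
    have : 3 / ε ≤ b := by rw [hb]; gcongr; norm_num
    linarith
  calc exp (-m ^ (ε / 3)) ≤ exp (-log (3 / ε)) := by gcongr; linarith
    _ = ε / 3 := by rw [exp_neg, exp_log (by positivity), inv_div]

theorem exists_reserve_price_of_iid_mhr {Ω : Type*} [MeasurableSpace Ω] {μ : Measure Ω}
    [IsProbabilityMeasure μ] {m : ℕ} {X : Fin m → Ω → ℝ} (hX : ∀ i, Measurable (X i))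
    (hX0 : ∀ i ω, 0 ≤ X i ω) (hind : iIndepFun X μ) (hD : ∀ i, μ.map (X i) = D)
    (hpdf : D = volume.withDensity fun x => ENNReal.ofReal (f x)) {F : ℝ → ℝ}
    (hcdf : ∀ x, F x = (D (Set.Iic x)).toReal)
    (hMHR : MonotoneOn (fun x => f x / (1 - F x)) {x | F x < 1}) {M : Ω → ℝ}
    (hM : ∀ ω, IsGreatest (Set.range fun i => X i ω) (M ω)) (hMint : Integrable M μ)
    {δ : ℝ} (hδ0 : 0 < δ) (hδ : δ ≤ 1 / 3) (hlog : 1 ≤ δ * log m)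
    (hexp : exp (-(m : ℝ) ^ δ) ≤ δ) :
    ∃ r, 0 ≤ r ∧ (1 - 3 * δ) * ∫ ω, M ω ∂μ ≤ (μ {ω | r ≤ M ω}).toReal * r := by
  have hm1 : 1 < (m : ℝ) := by
    by_contra! h
    nlinarith [log_nonpos m.cast_nonneg h]
  have hm0 : (0 : ℝ) < m := by linarith
  have i₀ : Fin m := ⟨0, by exact_mod_cast hm0⟩
  have : IsProbabilityMeasure D :=
    hD i₀ ▸ Measure.isProbabilityMeasure_map (hX i₀).aemeasurable
  obtain ⟨t, ht0, htail, hbody⟩ := exists_survival_quantile_rpow_bounds hpdf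
    (monotoneOn_div_survival hcdf hMHR) (hD i₀ ▸ map_Iio_zero (hX i₀) (hX0 i₀)) hm1
  have hmean : ∫ ω, M ω ∂μ ≤ t + (log m / t)⁻¹ := by
    refine integral_le_add_inv_of_tail_le_exp hMint (div_pos (log_pos hm1) ht0) fun x hx => ?_
    calc μ.real {ω | x < M ω} ≤ m * survival D x := by
          simpa only [Fintype.card_fin] using measureReal_lt_max_le hM hX hD x
      _ ≤ m * (m : ℝ) ^ (-(x / t)) := by gcongr; exact htail x hx.le
      _ = exp (-(log m / t) * (x - t)) := by
          rw [rpow_def_of_pos hm0, show -(log m / t) * (x - t) = log m + log m * -(x / t) by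
            field_simp; ring, exp_add, exp_log hm0]
  set r := (1 - δ) * t with hr
  have hsold : 1 - δ ≤ (μ {ω | r ≤ M ω}).toReal := by
    have hmG : (m : ℝ) ^ δ ≤ m * survival D r := by
      calc (m : ℝ) ^ δ = m * (m : ℝ) ^ (-(1 - δ)) := by
            rw [← rpow_one_add' hm0.le (by ring_nf; positivity)]; ring_nf
        _ ≤ m * survival D r := by gcongr; exact hbody _ (by linarith) (by linarith)
    calc 1 - δ ≤ 1 - exp (-(m * survival D r)) := by
          linarith [exp_le_exp.2 (neg_le_neg hmG)]
      _ ≤ μ.real {ω | r ≤ M ω} := by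
          simpa only [Fintype.card_fin] using one_sub_exp_le_measureReal_le_max hM hX hD hind r
  have hinv : (log m / t)⁻¹ ≤ δ * t := by
    rw [inv_div, div_le_iff₀ (log_pos hm1)]
    nlinarith
  refine ⟨r, by nlinarith, ?_⟩
  calc (1 - 3 * δ) * ∫ ω, M ω ∂μ ≤ (1 - 3 * δ) * ((1 + δ) * t) := by
        gcongr
        · linarith
        · linarith
    _ ≤ (1 - δ) * r := by rw [hr]; nlinarith [sq_nonneg δ]
    _ ≤ (μ {ω | r ≤ M ω}).toReal * r := by gcongr; nlinarith

end

theorem iid_population_reserve_prices_general {Ω : Type*} [MeasurableSpace Ω] (μ : Measure Ω)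
    [IsProbabilityMeasure μ] (ε : ℝ) (hε0 : 0 < ε) (hε1 : ε < 1)
    (m : ℕ) (hm : (12 / ε) ^ (12 / ε) ≤ (m : ℝ)) (n : ℕ)
    (v : Fin m → Fin n → Ω → ℝ)
    (hmeas : ∀ i j, Measurable (v i j))
    (hnonneg : ∀ i j ω, 0 ≤ v i j ω)
    (hindep : ∀ j, iIndepFun (fun i => v i j) μ)
    (D : Fin n → Measure ℝ) (hD : ∀ i j, μ.map (v i j) = D j)
    (f F : Fin n → ℝ → ℝ)
    (hpdf : ∀ j, D j = MeasureTheory.volume.withDensity fun x => ENNReal.ofReal (f j x))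
    (hcdf : ∀ j x, F j x = (D j (Set.Iic x)).toReal)
    (hMHR : ∀ j, MonotoneOn (fun x => f j x / (1 - F j x)) {x | F j x < 1})
    (M : Fin n → Ω → ℝ)
    (hM : ∀ j ω, IsGreatest (Set.range fun i => v i j ω) (M j ω))
    (hMint : ∀ j, Integrable (M j) μ) :
    ∃ r : Fin n → ℝ, (∀ j, 0 ≤ r j) ∧
      (1 - ε) * (∑ j : Fin n, ∫ ω, M j ω ∂μ) ≤
        ∑ j : Fin n, (μ {ω | r j ≤ M j ω}).toReal * r j := by
  obtain ⟨hlog, hexp⟩ := one_le_mul_log_and_exp_neg_rpow_le hε0 (by linarith) hm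
  choose r hr0 hr using fun j => exists_reserve_price_of_iid_mhr (fun i => hmeas i j)
    (fun i => hnonneg i j) (hindep j) (fun i => hD i j) (hpdf j) (hcdf j) (hMHR j) (hM j)
    (hMint j) (by positivity) (by linarith) hlog hexp
  refine ⟨r, hr0, ?_⟩
  rw [mul_sum]
  refine sum_le_sum fun j _ => ?_
  simpa only [mul_div_cancel₀ ε (three_ne_zero (α := ℝ))] using hr j

/-- **Per-item reserve prices for many i.i.d. bidders from the same population.** With
`m ≥ (12/ε)^{12/ε}` bidders whose values `v i j` for each item `j` are i.i.d. with a
common MHR distribution `D j` (pdf `f j`, cdf `F j`), there exist reserve prices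
`r j ≥ 0` such that `∑_j Pr[max_i v i j ≥ r j] · r j ≥ (1-ε) ∑_j E[max_i v i j]`. -/
theorem iid_population_reserve_prices {Ω : Type*} [MeasurableSpace Ω] (μ : Measure Ω)
    [IsProbabilityMeasure μ] (ε : ℝ) (hε0 : 0 < ε) (hε1 : ε < 1)
    (m : ℕ) (hm : (12 / ε) ^ (12 / ε) ≤ (m : ℝ)) (n : ℕ) (hn : 1 ≤ n)
    (v : Fin m → Fin n → Ω → ℝ)
    (hmeas : ∀ i j, Measurable (v i j))
    (hnonneg : ∀ i j ω, 0 ≤ v i j ω)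
    (hindep : ∀ j, iIndepFun (fun i => v i j) μ)
    (D : Fin n → Measure ℝ) (hD : ∀ i j, μ.map (v i j) = D j)
    (f F : Fin n → ℝ → ℝ)
    (hpdf : ∀ j, D j = MeasureTheory.volume.withDensity fun x => ENNReal.ofReal (f j x))
    (hcdf : ∀ j x, F j x = (D j (Set.Iic x)).toReal)
    (hMHR : ∀ j, MonotoneOn (fun x => f j x / (1 - F j x)) {x | F j x < 1})
    (M : Fin n → Ω → ℝ)
    (hM : ∀ j ω, IsGreatest (Set.range fun i => v i j ω) (M j ω))
    (hMint : ∀ j, Integrable (M j) μ) :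
    ∃ r : Fin n → ℝ, (∀ j, 0 ≤ r j) ∧
      (1 - ε) * (∑ j : Fin n, ∫ ω, M j ω ∂μ) ≤
        ∑ j : Fin n, (μ {ω | r j ≤ M j ω}).toReal * r j :=
  iid_population_reserve_prices_general μ ε hε0 hε1 m hm n v hmeas hnonneg hindep D hD f F hpdf hcdf
    hMHR M hM hMint
end

section
/- Consider k bidders and n items, where for each bidder i and item j the value v_{ij} is drawn from a finitely supported probability distribution F_{ij} on ℝ_{≥0}, all k·n values being mutually independent. A (randomized) mechanism is a pair (x, p) where for every type profile v, x(v) ∈ [0,1]^{k×n} satisfies ∑_{i=1}^k x_{ij}(v) ≤ 1 for every item j, and p(v) ∈ ℝ^k. The mechanism is IC if for every bidder i, every type v_i, every report b_i in the support, and every profile v_{−i} of the other bidders: v_i · x_i(v_i, v_{−i}) − p_i(v_i, v_{−i}) ≥ v_i · x_i(b_i, v_{−i}) − p_i(b_i, v_{−i}); it is IR if v_i · x_i(v) − p_i(v) ≥ 0 for every profile v. Its revenue is E_v[∑_{i=1}^k p_i(v)], where v is drawn from the product distribution. For S ⊆ {1,…,n}, let OPT(S) be the supremum of revenue over all IC and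 IR mechanisms with x_{ij}(v) = 0 for all j ∉ S and all v. Then for every S ⊆ {1,…,n}: OPT({1,…,n}) ≤ OPT(S) + ∑_{j ∉ S} E[ max_i v_{ij} ]. -/
open Finset

/-! Multi-item auctions with `k` additive bidders, `n` items, and finitely supported
independent value distributions: bidder `i`'s value for item `j` is drawn from the
distribution with (finite) support `s i j ⊆ ℝ≥0` and probability mass function `q i j`,
all `k·n` values being mutually independent (so a profile `v` has probability
`∏ i ∏ j, q i j (v i j)`). -/

/-- The finite set of all type profiles. -/
noncomputable def allProfiles (k n : ℕ) (s : Fin k → Fin n → Finset ℝ) :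
    Finset (Fin k → Fin n → ℝ) :=
  Fintype.piFinset fun i => Fintype.piFinset fun j => s i j

/-- The probability of the type profile `v` under the product distribution. -/
noncomputable def profileProb (k n : ℕ) (q : Fin k → Fin n → ℝ → ℝ)
    (v : Fin k → Fin n → ℝ) : ℝ :=
  ∏ i : Fin k, ∏ j : Fin n, q i j (v i j)

/-- A mechanism `(x, p)` is feasible if allocations are in `[0,1]` and each item is
allocated at most once. -/
def Feasible (k n : ℕ) (s : Fin k → Fin n → Finset ℝ)
    (x : (Fin k → Fin n → ℝ) → Fin k → Fin n → ℝ) : Prop :=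
  ∀ v ∈ allProfiles k n s, (∀ i j, 0 ≤ x v i j ∧ x v i j ≤ 1) ∧
    ∀ j : Fin n, (∑ i : Fin k, x v i j) ≤ 1

/-- Incentive compatibility: for every bidder `i`, every profile (every own type and
every profile of the others in the support), and every report `bi` in the support,
truth-telling maximizes the quasi-linear utility. -/
def IC (k n : ℕ) (s : Fin k → Fin n → Finset ℝ)
    (x : (Fin k → Fin n → ℝ) → Fin k → Fin n → ℝ)
    (p : (Fin k → Fin n → ℝ) → Fin k → ℝ) : Prop :=
  ∀ v ∈ allProfiles k n s, ∀ i : Fin k, ∀ bi : Fin n → ℝ, (∀ j, bi j ∈ s i j) →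
    (∑ j : Fin n, v i j * x (Function.update v i bi) i j) -
        p (Function.update v i bi) i ≤
      (∑ j : Fin n, v i j * x v i j) - p v i

/-- Individual rationality: a truthful bidder's utility is nonnegative. -/
def IR (k n : ℕ) (s : Fin k → Fin n → Finset ℝ)
    (x : (Fin k → Fin n → ℝ) → Fin k → Fin n → ℝ)
    (p : (Fin k → Fin n → ℝ) → Fin k → ℝ) : Prop :=
  ∀ v ∈ allProfiles k n s, ∀ i : Fin k, 0 ≤ (∑ j : Fin n, v i j * x v i j) - p v i

/-- The expected revenue of mechanism `(x, p)`. -/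
noncomputable def revenue (k n : ℕ) (s : Fin k → Fin n → Finset ℝ)
    (q : Fin k → Fin n → ℝ → ℝ) (p : (Fin k → Fin n → ℝ) → Fin k → ℝ) : ℝ :=
  ∑ v ∈ allProfiles k n s, profileProb k n q v * ∑ i : Fin k, p v i

/-- `OPT k n s q S`: the supremum of expected revenue over all IC and IR mechanisms that
never allocate any item outside `S`. -/
noncomputable def OPT (k n : ℕ) (s : Fin k → Fin n → Finset ℝ)
    (q : Fin k → Fin n → ℝ → ℝ) (S : Finset (Fin n)) : ℝ :=
  sSup {r : ℝ | ∃ x : (Fin k → Fin n → ℝ) → Fin k → Fin n → ℝ,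
    ∃ p : (Fin k → Fin n → ℝ) → Fin k → ℝ,
      Feasible k n s x ∧ IC k n s x p ∧ IR k n s x p ∧
      (∀ v ∈ allProfiles k n s, ∀ i : Fin k, ∀ j : Fin n, j ∉ S → x v i j = 0) ∧
      r = revenue k n s q p}

/-! Given an IC and IR mechanism `(x, p)` for all items, build one for the items of `S`: on a
profile `v`, draw fresh values `w` for the items outside `S`, run `(x, p)` on the spliced profile,
hand out only the items of `S`, and refund each bidder the value she would have had under `w` for
the items she was allotted outside `S`. A deviation of bidder `i` only changes the `S`-coordinates
of her row, so IC and IR hold pointwise in `w`. Since the spliced profile has the same distribution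
as a fresh one, the revenue lost is exactly the expected welfare `(x, p)` generates outside `S`,
and feasibility bounds that welfare for item `j` by `max_i v i j`. -/

variable {k n : ℕ} {s : Fin k → Fin n → Finset ℝ} {q : Fin k → Fin n → ℝ → ℝ}

lemma mem_allProfiles {v : Fin k → Fin n → ℝ} :
    v ∈ allProfiles k n s ↔ ∀ i j, v i j ∈ s i j := by
  simp only [allProfiles, Fintype.mem_piFinset]

lemma profileProb_nonneg (hq0 : ∀ i j x, 0 ≤ q i j x) (v : Fin k → Fin n → ℝ) :
    0 ≤ profileProb k n q v :=
  prod_nonneg fun i _ => prod_nonneg fun j _ => hq0 i j _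

lemma sum_profileProb (hq1 : ∀ i j, ∑ x ∈ s i j, q i j x = 1) :
    ∑ v ∈ allProfiles k n s, profileProb k n q v = 1 := by
  simp only [allProfiles, profileProb]
  rw [← prod_univ_sum _ fun i (u : Fin n → ℝ) => ∏ j, q i j (u j)]
  exact prod_eq_one fun i _ => by
    rw [← prod_univ_sum]
    exact prod_eq_one fun j _ => hq1 i j

section Splice

variable (S : Finset (Fin n))

def splice (v w : Fin k → Fin n → ℝ) : Fin k → Fin n → ℝ :=
  fun i => S.piecewise (v i) (w i)

lemma splice_apply_of_notMem {v w : Fin k → Fin n → ℝ} {i : Fin k} {j : Fin n} (hj : j ∉ S) :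
    splice S v w i j = w i j :=
  piecewise_eq_of_notMem _ _ _ hj

lemma splice_mem_allProfiles {v w : Fin k → Fin n → ℝ} (hv : v ∈ allProfiles k n s)
    (hw : w ∈ allProfiles k n s) : splice S v w ∈ allProfiles k n s :=
  mem_allProfiles.2 fun i j => S.piecewise_cases (v i) (w i) (· ∈ s i j)
    (mem_allProfiles.1 hv i j) (mem_allProfiles.1 hw i j)

lemma splice_splice_splice (v w : Fin k → Fin n → ℝ) :
    splice S (splice S v w) (splice S w v) = v := by
  funext i j
  by_cases hj : j ∈ S <;> simp [splice, hj]

lemma splice_update (v w : Fin k → Fin n → ℝ) (i : Fin k) (b : Fin n → ℝ) :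
    splice S (Function.update v i b) w =
      Function.update (splice S v w) i (S.piecewise b (w i)) := by
  funext i' j
  rcases eq_or_ne i' i with rfl | h
  · simp [splice]
  · simp [splice, Function.update_of_ne h]

lemma profileProb_splice_mul_splice (v w : Fin k → Fin n → ℝ) :
    profileProb k n q (splice S v w) * profileProb k n q (splice S w v) =
      profileProb k n q v * profileProb k n q w := by
  simp only [profileProb, ← prod_mul_distrib]
  refine prod_congr rfl fun i _ => prod_congr rfl fun j _ => ?_
  by_cases hj : j ∈ S <;> simp [splice, hj, mul_comm]

end Splice

noncomputable def profileExpect (s : Fin k → Fin n → Finset ℝ) (q : Fin k → Fin n → ℝ → ℝ)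
    (f : (Fin k → Fin n → ℝ) → ℝ) : ℝ :=
  ∑ v ∈ allProfiles k n s, profileProb k n q v * f v

local notation "𝔼[" f "]" => profileExpect s q f

section Expectation

variable {f g : (Fin k → Fin n → ℝ) → ℝ}

lemma profileExpect_nonneg (hq0 : ∀ i j x, 0 ≤ q i j x)
    (hf : ∀ v ∈ allProfiles k n s, 0 ≤ f v) : 0 ≤ 𝔼[f] :=
  sum_nonneg fun v hv => mul_nonneg (profileProb_nonneg hq0 v) (hf v hv)

lemma profileExpect_mono (hq0 : ∀ i j x, 0 ≤ q i j x)
    (hfg : ∀ v ∈ allProfiles k n s, f v ≤ g v) : 𝔼[f] ≤ 𝔼[g] :=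
  sum_le_sum fun v hv => mul_le_mul_of_nonneg_left (hfg v hv) (profileProb_nonneg hq0 v)

lemma profileExpect_const (hq1 : ∀ i j, ∑ x ∈ s i j, q i j x = 1) (c : ℝ) :
    𝔼[fun _ => c] = c := by
  rw [profileExpect, ← sum_mul, sum_profileProb hq1, one_mul]

lemma profileExpect_sub : 𝔼[fun v => f v - g v] = 𝔼[f] - 𝔼[g] := by
  simp only [profileExpect, mul_sub, sum_sub_distrib]

lemma profileExpect_const_mul (c : ℝ) : 𝔼[fun v => c * f v] = c * 𝔼[f] := by
  simp only [profileExpect, mul_sum, mul_left_comm]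

lemma profileExpect_sum {ι : Type*} (t : Finset ι) (f : ι → (Fin k → Fin n → ℝ) → ℝ) :
    𝔼[fun v => ∑ a ∈ t, f a v] = ∑ a ∈ t, 𝔼[f a] := by
  simp only [profileExpect, mul_sum]
  exact sum_comm

lemma profileExpect_profileExpect_splice (hq1 : ∀ i j, ∑ x ∈ s i j, q i j x = 1)
    (S : Finset (Fin n)) (f : (Fin k → Fin n → ℝ) → ℝ) :
    𝔼[fun v => 𝔼[fun w => f (splice S v w)]] = 𝔼[f] := by
  -- `(v, w) ↦ (splice S v w, splice S w v)` is an involution preserving the product weight.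
  have swap : ∑ vw ∈ allProfiles k n s ×ˢ allProfiles k n s,
      profileProb k n q vw.1 * profileProb k n q vw.2 * f (splice S vw.1 vw.2) =
      ∑ vw ∈ allProfiles k n s ×ˢ allProfiles k n s,
        profileProb k n q vw.1 * profileProb k n q vw.2 * f vw.1 := by
    refine sum_nbij' (fun vw => (splice S vw.1 vw.2, splice S vw.2 vw.1))
      (fun vw => (splice S vw.1 vw.2, splice S vw.2 vw.1)) ?_ ?_ ?_ ?_ ?_
    all_goals rintro ⟨v, w⟩ hvw
    all_goals simp only [mem_product] at hvw ⊢
    · exact ⟨splice_mem_allProfiles S hvw.1 hvw.2, splice_mem_allProfiles S hvw.2 hvw.1⟩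
    · exact ⟨splice_mem_allProfiles S hvw.1 hvw.2, splice_mem_allProfiles S hvw.2 hvw.1⟩
    · simp only [splice_splice_splice]
    · simp only [splice_splice_splice]
    · rw [profileProb_splice_mul_splice]
  simp only [profileExpect, mul_sum, ← mul_assoc]
  rw [← sum_product', swap, sum_product]
  simp only [← sum_mul, mul_assoc, ← mul_sum, sum_profileProb hq1, one_mul]

end Expectation

def utility (x : (Fin k → Fin n → ℝ) → Fin k → Fin n → ℝ) (p : (Fin k → Fin n → ℝ) → Fin k → ℝ)
    (t : Fin n → ℝ) (v : Fin k → Fin n → ℝ) (i : Fin k) : ℝ :=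
  ∑ j, t j * x v i j - p v i

section Resampling

variable (s q) (S : Finset (Fin n)) (x : (Fin k → Fin n → ℝ) → Fin k → Fin n → ℝ)
  (p : (Fin k → Fin n → ℝ) → Fin k → ℝ)

noncomputable def resampledAlloc : (Fin k → Fin n → ℝ) → Fin k → Fin n → ℝ :=
  fun v i j => if j ∈ S then 𝔼[fun w => x (splice S v w) i j] else 0

noncomputable def resampledPay : (Fin k → Fin n → ℝ) → Fin k → ℝ :=
  fun v i => 𝔼[fun w => p (splice S v w) i - ∑ j ∈ Sᶜ, w i j * x (splice S v w) i j]

variable {s q S x p}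

lemma utility_resampled (v : Fin k → Fin n → ℝ) (i : Fin k) (t : Fin n → ℝ) :
    utility (resampledAlloc s q S x) (resampledPay s q S x p) t v i =
      𝔼[fun w => utility x p (S.piecewise t (w i)) (splice S v w) i] := by
  have split : ∀ w, ∑ j, S.piecewise t (w i) j * x (splice S v w) i j =
      ∑ j ∈ S, t j * x (splice S v w) i j + ∑ j ∈ Sᶜ, w i j * x (splice S v w) i j := by
    intro w
    rw [← sum_add_sum_compl S]
    congr 1 <;> refine sum_congr rfl fun j hj => ?_
    · rw [piecewise_eq_of_mem _ _ _ hj]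
    · rw [piecewise_eq_of_notMem _ _ _ (mem_compl.1 hj)]
  have alloc : ∑ j, t j * resampledAlloc s q S x v i j =
      𝔼[fun w => ∑ j ∈ S, t j * x (splice S v w) i j] := by
    simp only [resampledAlloc, mul_ite, mul_zero, sum_ite_mem, univ_inter, profileExpect_sum,
      profileExpect_const_mul]
  simp only [utility, split, alloc, resampledPay, ← profileExpect_sub]
  congr 1
  funext w
  ring

lemma IC.resampled (hq0 : ∀ i j x, 0 ≤ q i j x) (hic : IC k n s x p) :
    IC k n s (resampledAlloc s q S x) (resampledPay s q S x p) := by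
  intro v hv i b hb
  change utility _ _ (v i) _ i ≤ utility _ _ (v i) v i
  rw [utility_resampled, utility_resampled]
  refine profileExpect_mono hq0 fun w hw => ?_
  have hb' : ∀ j, S.piecewise b (w i) j ∈ s i j := fun j =>
    S.piecewise_cases b (w i) (· ∈ s i j) (hb j) (mem_allProfiles.1 hw i j)
  rw [splice_update]
  exact hic _ (splice_mem_allProfiles S hv hw) i _ hb'

lemma IR.resampled (hq0 : ∀ i j x, 0 ≤ q i j x) (hir : IR k n s x p) :
    IR k n s (resampledAlloc s q S x) (resampledPay s q S x p) := by
  intro v hv i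
  change 0 ≤ utility _ _ (v i) v i
  rw [utility_resampled]
  exact profileExpect_nonneg hq0 fun w hw => hir _ (splice_mem_allProfiles S hv hw) i

lemma Feasible.resampled (hq0 : ∀ i j x, 0 ≤ q i j x) (hq1 : ∀ i j, ∑ x ∈ s i j, q i j x = 1)
    (hfeas : Feasible k n s x) : Feasible k n s (resampledAlloc s q S x) := by
  intro v hv
  have hfeas' := fun w (hw : w ∈ allProfiles k n s) => hfeas _ (splice_mem_allProfiles S hv hw)
  refine ⟨fun i j => ?_, fun j => ?_⟩
  · by_cases hj : j ∈ S
    · simp only [resampledAlloc, if_pos hj]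
      constructor
      · exact profileExpect_nonneg hq0 fun w hw => ((hfeas' w hw).1 i j).1
      · calc _ ≤ 𝔼[fun _ => (1 : ℝ)] := profileExpect_mono hq0 fun w hw => ((hfeas' w hw).1 i j).2
          _ = 1 := profileExpect_const hq1 1
    · simp [resampledAlloc, hj]
  · by_cases hj : j ∈ S
    · simp only [resampledAlloc, if_pos hj, ← profileExpect_sum]
      calc _ ≤ 𝔼[fun _ => (1 : ℝ)] := profileExpect_mono hq0 fun w hw => (hfeas' w hw).2 j
        _ = 1 := profileExpect_const hq1 1
    · simp [resampledAlloc, hj]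

lemma resampledAlloc_eq_zero {v : Fin k → Fin n → ℝ} {i : Fin k} {j : Fin n} (hj : j ∉ S) :
    resampledAlloc s q S x v i j = 0 :=
  if_neg hj

lemma revenue_resampledPay (hq1 : ∀ i j, ∑ x ∈ s i j, q i j x = 1) :
    revenue k n s q (resampledPay s q S x p) =
      revenue k n s q p - 𝔼[fun u => ∑ i, ∑ j ∈ Sᶜ, u i j * x u i j] := by
  set g : (Fin k → Fin n → ℝ) → ℝ := fun u => ∑ i, (p u i - ∑ j ∈ Sᶜ, u i j * x u i j)
  change 𝔼[fun v => ∑ i, resampledPay s q S x p v i] = 𝔼[fun v => ∑ i, p v i] - _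
  calc _ = 𝔼[fun v => 𝔼[fun w => g (splice S v w)]] := by
        simp only [resampledPay, ← profileExpect_sum]
        refine congrArg _ (funext fun v => congrArg _ (funext fun w => ?_))
        refine sum_congr rfl fun i _ => congrArg _ (sum_congr rfl fun j hj => ?_)
        rw [splice_apply_of_notMem S (mem_compl.1 hj)]
    _ = 𝔼[g] := profileExpect_profileExpect_splice hq1 S g
    _ = _ := by simp only [g, sum_sub_distrib, profileExpect_sub]

end Resampling

lemma sum_mul_le_sup' {R ι : Type*} [Semiring R] [LinearOrder R] [IsOrderedRing R]
    {t : Finset ι} (ht : t.Nonempty) {a b : ι → R} (ha : 0 ≤ t.sup' ht a)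
    (hb : ∀ i ∈ t, 0 ≤ b i) (hb1 : ∑ i ∈ t, b i ≤ 1) : ∑ i ∈ t, a i * b i ≤ t.sup' ht a :=
  calc ∑ i ∈ t, a i * b i ≤ ∑ i ∈ t, t.sup' ht a * b i :=
        sum_le_sum fun i hi => mul_le_mul_of_nonneg_right (le_sup' a hi) (hb i hi)
    _ = t.sup' ht a * ∑ i ∈ t, b i := (mul_sum _ _ _).symm
    _ ≤ t.sup' ht a * 1 := mul_le_mul_of_nonneg_left hb1 ha
    _ = t.sup' ht a := mul_one _

section Mechanism

variable {x : (Fin k → Fin n → ℝ) → Fin k → Fin n → ℝ} {p : (Fin k → Fin n → ℝ) → Fin k → ℝ}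

lemma profileExpect_welfare_le_sum_sup' (hne : (univ : Finset (Fin k)).Nonempty)
    (hs : ∀ i j, ∀ x ∈ s i j, (0 : ℝ) ≤ x) (hq0 : ∀ i j x, 0 ≤ q i j x)
    (hfeas : Feasible k n s x) (T : Finset (Fin n)) :
    𝔼[fun u => ∑ i, ∑ j ∈ T, u i j * x u i j] ≤
      ∑ j ∈ T, 𝔼[fun u => univ.sup' hne fun i => u i j] := by
  rw [← profileExpect_sum]
  refine profileExpect_mono hq0 fun u hu => ?_
  rw [sum_comm]
  refine sum_le_sum fun j _ => sum_mul_le_sup' hne ?_ (fun i _ => ((hfeas u hu).1 i j).1)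
    ((hfeas u hu).2 j)
  obtain ⟨i, hi⟩ := hne
  exact (hs i j _ (mem_allProfiles.1 hu i j)).trans (le_sup' (fun i => u i j) hi)

lemma payment_le_sum_values (hs : ∀ i j, ∀ x ∈ s i j, (0 : ℝ) ≤ x) (hfeas : Feasible k n s x)
    (hir : IR k n s x p) {v : Fin k → Fin n → ℝ} (hv : v ∈ allProfiles k n s) (i : Fin k) :
    p v i ≤ ∑ j, v i j := by
  have hvalue : ∑ j, v i j * x v i j ≤ ∑ j, v i j := sum_le_sum fun j _ =>
    mul_le_of_le_one_right (hs i j _ (mem_allProfiles.1 hv i j)) ((hfeas v hv).1 i j).2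
  linarith [hir v hv i]

lemma revenue_le_OPT (hs : ∀ i j, ∀ x ∈ s i j, (0 : ℝ) ≤ x) (hq0 : ∀ i j x, 0 ≤ q i j x)
    {S : Finset (Fin n)} (hfeas : Feasible k n s x) (hic : IC k n s x p) (hir : IR k n s x p)
    (hS : ∀ v ∈ allProfiles k n s, ∀ i j, j ∉ S → x v i j = 0) :
    revenue k n s q p ≤ OPT k n s q S := by
  refine le_csSup ⟨𝔼[fun v => ∑ i, ∑ j, v i j], ?_⟩ ⟨x, p, hfeas, hic, hir, hS, rfl⟩
  rintro _ ⟨x, p, hfeas, -, hir, -, rfl⟩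
  exact profileExpect_mono hq0 fun v hv =>
    sum_le_sum fun i _ => payment_le_sum_values hs hfeas hir hv i

lemma OPT_le {S : Finset (Fin n)} {c : ℝ}
    (h : ∀ (x : (Fin k → Fin n → ℝ) → Fin k → Fin n → ℝ) (p : (Fin k → Fin n → ℝ) → Fin k → ℝ),
      Feasible k n s x → IC k n s x p → IR k n s x p →
      (∀ v ∈ allProfiles k n s, ∀ i j, j ∉ S → x v i j = 0) → revenue k n s q p ≤ c) :
    OPT k n s q S ≤ c := by
  refine csSup_le ⟨_, 0, 0, ?_, ?_, ?_, ?_, rfl⟩ ?_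
  · exact fun v _ => ⟨fun i j => ⟨le_rfl, zero_le_one⟩, fun j => by simp⟩
  · intro v _ i b _; simp
  · intro v _ i; simp
  · intro v _ i j _; rfl
  · rintro _ ⟨x, p, hfeas, hic, hir, hS, rfl⟩
    exact h x p hfeas hic hir hS

end Mechanism

theorem opt_revenue_decomposition_general (k n : ℕ) (hk : 0 < k)
    (s : Fin k → Fin n → Finset ℝ)
    (hs : ∀ i j, ∀ x ∈ s i j, (0 : ℝ) ≤ x)
    (q : Fin k → Fin n → ℝ → ℝ)
    (hq0 : ∀ i j x, 0 ≤ q i j x)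
    (hq1 : ∀ i j, ∑ x ∈ s i j, q i j x = 1)
    (S : Finset (Fin n)) :
    OPT k n s q Finset.univ ≤ OPT k n s q S +
      ∑ j ∈ Sᶜ, ∑ v ∈ allProfiles k n s, profileProb k n q v *
        Finset.univ.sup' (Finset.univ_nonempty_iff.mpr (Fin.pos_iff_nonempty.mp hk))
          (fun i => v i j) := by
  refine OPT_le fun x p hfeas hic hir _ => ?_
  have hS : revenue k n s q (resampledPay s q S x p) ≤ OPT k n s q S :=
    revenue_le_OPT hs hq0 (hfeas.resampled hq0 hq1) (hic.resampled hq0)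
      (hir.resampled hq0) fun v _ i j hj => resampledAlloc_eq_zero hj
  rw [revenue_resampledPay hq1] at hS
  have hwelfare := profileExpect_welfare_le_sum_sup'
    (univ_nonempty_iff.mpr (Fin.pos_iff_nonempty.mp hk)) hs hq0 hfeas Sᶜ
  unfold profileExpect at hS hwelfare
  linarith

/-- **Decomposition of the optimal revenue.** For every subset `S` of the items,
`OPT([n]) ≤ OPT(S) + ∑_{j ∉ S} E[max_i v i j]`. -/
theorem opt_revenue_decomposition (k n : ℕ) (hk : 0 < k)
    (s : Fin k → Fin n → Finset ℝ) (hsne : ∀ i j, (s i j).Nonempty)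
    (hs : ∀ i j, ∀ x ∈ s i j, (0 : ℝ) ≤ x)
    (q : Fin k → Fin n → ℝ → ℝ)
    (hq0 : ∀ i j x, 0 ≤ q i j x)
    (hq1 : ∀ i j, ∑ x ∈ s i j, q i j x = 1)
    (S : Finset (Fin n)) :
    OPT k n s q Finset.univ ≤ OPT k n s q S +
      ∑ j ∈ Sᶜ, ∑ v ∈ allProfiles k n s, profileProb k n q v *
        Finset.univ.sup' (Finset.univ_nonempty_iff.mpr (Fin.pos_iff_nonempty.mp hk))
          (fun i => v i j) :=
  opt_revenue_decomposition_general k n hk s hs q hq0 hq1 S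
end
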